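/- arXiv:1508.04074 — 2 statements merged into one kernel-verified Lean document; each statement's English description precedes it below -/
import Mathlib

section
/- Let f₁, …, f_n be positive elements of a real Banach lattice X. Then 2^{-n}·Σ_{S ⊆ {1,…,n}} ((Σ_{i ∈ S} f_i) ⊓ (Σ_{i ∉ S} f_i)) ≥ 2^{-8}·(Σ_{i=1}^n f_i − ⋁_{i=1}^n f_i) in the lattice order. Consequently, 2^{-n}·Σ_{S ⊆ {1,…,n}} ‖(Σ_{i ∈ S} f_i) ⊓ (Σ_{i ∉ S} f_i)‖ ≥ 2^{-8}·‖Σ_{i=1}^n f_i − ⋁_{i=1}^n f_i‖. -/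
/-!
Write `T(A) = ∑_{S ⊆ A} (∑_S f) ⊓ (∑_{A \ S} f)`. Induction on `A` gives the sharper bound
`2^|A| (∑_A f - ⋁_A f) ≤ 4 T(A)`. When a point `a` with `c = f a` is added, the splittings `S` and
`S ∪ {a}` of `A ∪ {a}` together contribute at least `2 (x ⊓ y) + c ⊓ |y - x|`, where `x`, `y` are
the two halves of the splitting `S` of `A`; so `T(A ∪ {a}) ≥ 2 T(A) + Z` with
`Z = ∑_S c ⊓ |y_S - x_S|`. Pairing `S` with `S ∪ {i}` shows `2 Z ≥ 2^|A| (c ⊓ f i)` for each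
`i ∈ A`, hence `2 Z ≥ 2^|A| (c ⊓ ⋁_A f)`, and the identity
`c + ∑_A f - c ⊔ ⋁_A f = (∑_A f - ⋁_A f) + c ⊓ ⋁_A f` closes the induction. Dividing by powers of
two in the order only needs that `0 ≤ 2 • a` implies `0 ≤ a` in a lattice-ordered group.
-/

open Finset

section LatticeOrderedAddCommGroup

variable {α : Type*} [Lattice α] [AddCommGroup α] [AddLeftMono α] {a b c : α}

theorem add_inf_le_inf_add_inf (ha : 0 ≤ a) (hb : 0 ≤ b) (hc : 0 ≤ c) :
    (a + b) ⊓ c ≤ a ⊓ c + b ⊓ c := by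
  rw [inf_add, add_inf, add_inf]
  refine le_inf (le_inf inf_le_left ?_) (le_inf ?_ ?_) <;> refine inf_le_right.trans ?_
  · exact le_add_of_nonneg_left ha
  · exact le_add_of_nonneg_right hb
  · exact le_add_of_nonneg_left hc

theorem inf_nsmul_le_nsmul_inf (ha : 0 ≤ a) (hb : 0 ≤ b) : ∀ n : ℕ, a ⊓ n • b ≤ n • (a ⊓ b)
  | 0 => by simp
  | n + 1 => calc
      a ⊓ (n + 1) • b = (n • b + b) ⊓ a := by rw [succ_nsmul, inf_comm]
      _ ≤ n • b ⊓ a + b ⊓ a := add_inf_le_inf_add_inf (nsmul_nonneg hb n) hb ha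
      _ ≤ n • (a ⊓ b) + a ⊓ b := by
        rw [inf_comm _ a, inf_comm b]
        gcongr
        exact inf_nsmul_le_nsmul_inf ha hb n
      _ = (n + 1) • (a ⊓ b) := (succ_nsmul _ _).symm

theorem nsmul_inf_nsmul_eq_zero (ha : 0 ≤ a) (hb : 0 ≤ b) (hab : a ⊓ b = 0) (m n : ℕ) :
    m • a ⊓ n • b = 0 := by
  refine le_antisymm ?_ (le_inf (nsmul_nonneg ha m) (nsmul_nonneg hb n))
  have h : n • b ⊓ a ≤ 0 := by
    simpa [inf_comm, hab] using inf_nsmul_le_nsmul_inf ha hb n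
  calc m • a ⊓ n • b = n • b ⊓ m • a := inf_comm _ _
    _ ≤ m • (n • b ⊓ a) := inf_nsmul_le_nsmul_inf (nsmul_nonneg hb n) ha m
    _ ≤ 0 := nsmul_nonpos h m

theorem nsmul_sup (n : ℕ) (a b : α) : n • (a ⊔ b) = n • a ⊔ n • b := by
  have hdisj : (a ⊔ b - a) ⊓ (a ⊔ b - b) = 0 := by rw [← sub_sup, sub_self]
  have h := nsmul_inf_nsmul_eq_zero (sub_nonneg.2 le_sup_left) (sub_nonneg.2 le_sup_right) hdisj n n
  rwa [nsmul_sub, nsmul_sub, ← sub_sup, sub_eq_zero] at h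

theorem nonneg_of_two_pow_nsmul_nonneg : ∀ {k : ℕ}, 0 ≤ 2 ^ k • a → 0 ≤ a
  | 0, h => by simpa using h
  | k + 1, h =>
    nonneg_of_two_pow_nsmul_nonneg (nsmul_two_semiclosed (by rwa [← mul_nsmul', ← pow_succ']))

theorem two_nsmul_inf_add_inf_abs_le (x y : α) (hc : 0 ≤ c) :
    2 • (x ⊓ y) + c ⊓ |y - x| ≤ x ⊓ (c + y) + (c + x) ⊓ y := by
  set m := x ⊓ y
  have habs : |y - x| = (x - m) + (y - m) := by
    have h : m + m = x + y - |y - x| := by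
      rw [← two_nsmul]
      exact two_nsmul_inf_eq_add_sub_abs_sub x y
    calc |y - x| = x + y - (m + m) := by rw [h]; abel
      _ = (x - m) + (y - m) := by abel
  have hx : m + (x - m) ⊓ c ≤ x ⊓ (c + y) :=
    le_inf (add_le_of_le_sub_left inf_le_left)
      ((add_le_add inf_le_right inf_le_right).trans_eq (add_comm y c))
  have hy : m + (y - m) ⊓ c ≤ (c + x) ⊓ y :=
    le_inf ((add_le_add inf_le_left inf_le_right).trans_eq (add_comm x c))
      (add_le_of_le_sub_left inf_le_left)
  calc 2 • m + c ⊓ |y - x| = m + m + ((x - m) + (y - m)) ⊓ c := by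
        rw [habs, two_nsmul, inf_comm]
    _ ≤ m + m + ((x - m) ⊓ c + (y - m) ⊓ c) := by
        gcongr
        exact add_inf_le_inf_add_inf (sub_nonneg.2 inf_le_left) (sub_nonneg.2 inf_le_right) hc
    _ = (m + (x - m) ⊓ c) + (m + (y - m) ⊓ c) := by abel
    _ ≤ x ⊓ (c + y) + (c + x) ⊓ y := add_le_add hx hy

theorem inf_le_inf_abs_add_inf_abs {t : α} (hc : 0 ≤ c) (ht : 0 ≤ t) (x y : α) :
    c ⊓ t ≤ c ⊓ |t + y - x| + c ⊓ |y - (t + x)| := by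
  have h : t ≤ |t + y - x| + |y - (t + x)| := calc
    t ≤ t + t := le_add_of_nonneg_left ht
    _ = (t + y - x) + -(y - (t + x)) := by abel
    _ ≤ |t + y - x| + |y - (t + x)| := add_le_add (le_abs_self _) (neg_le_abs _)
  calc c ⊓ t ≤ (|t + y - x| + |y - (t + x)|) ⊓ c := le_inf (inf_le_right.trans h) inf_le_left
    _ ≤ |t + y - x| ⊓ c + |y - (t + x)| ⊓ c :=
      add_inf_le_inf_add_inf (abs_nonneg _) (abs_nonneg _) hc
    _ = c ⊓ |t + y - x| + c ⊓ |y - (t + x)| := by rw [inf_comm, inf_comm |_|]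

theorem Finset.nsmul_inf_sup'_le {ι : Type*} {s : Finset ι} (hs : s.Nonempty) (g : ι → α)
    {n : ℕ} {z : α} (h : ∀ i ∈ s, n • (c ⊓ g i) ≤ z) : n • (c ⊓ s.sup' hs g) ≤ z := by
  let _ := AddCommGroup.toDistribLattice α
  refine s.sup'_induction hs g (p := fun x => n • (c ⊓ x) ≤ z) (fun x hx y hy => ?_) h
  rw [inf_sup_left, nsmul_sup]
  exact sup_le hx hy

end LatticeOrderedAddCommGroup

section Splittings

variable {α ι : Type*} [Lattice α] [AddCommGroup α] [AddLeftMono α] [DecidableEq ι] (f : ι → α)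

theorem sum_powerset_inf_nonneg (hf : ∀ i, 0 ≤ f i) (A : Finset ι) :
    0 ≤ ∑ S ∈ A.powerset, (∑ i ∈ S, f i) ⊓ (∑ i ∈ A \ S, f i) :=
  sum_nonneg fun _ _ => le_inf (sum_nonneg fun i _ => hf i) (sum_nonneg fun i _ => hf i)

theorem two_pow_card_nsmul_inf_le_two_nsmul_sum {A : Finset ι} {i : ι} {c : α} (hi : i ∈ A)
    (hc : 0 ≤ c) (hfi : 0 ≤ f i) :
    2 ^ #A • (c ⊓ f i) ≤ 2 • ∑ S ∈ A.powerset, c ⊓ |∑ j ∈ A \ S, f j - ∑ j ∈ S, f j| := by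
  have hi_erase : i ∉ A.erase i := notMem_erase i A
  rw [← insert_erase hi, sum_powerset_insert hi_erase, ← sum_add_distrib, card_insert_of_notMem hi_erase,
    pow_succ', mul_nsmul', ← card_powerset, ← sum_const]
  refine nsmul_le_nsmul_right (sum_le_sum fun S hS => ?_) 2
  have hiS : i ∉ S := fun h => hi_erase (mem_powerset.1 hS h)
  rw [insert_sdiff_of_notMem _ hiS, sum_insert (fun h => hi_erase (mem_sdiff.1 h).1),
    insert_sdiff_insert, sdiff_insert_of_notMem hi_erase, sum_insert hiS]
  exact inf_le_inf_abs_add_inf_abs hc hfi _ _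

theorem two_nsmul_sum_inf_add_sum_inf_abs_le {A : Finset ι} {a : ι} (ha : a ∉ A) (hfa : 0 ≤ f a) :
    2 • ∑ S ∈ A.powerset, (∑ i ∈ S, f i) ⊓ (∑ i ∈ A \ S, f i)
        + ∑ S ∈ A.powerset, f a ⊓ |∑ i ∈ A \ S, f i - ∑ i ∈ S, f i|
      ≤ ∑ S ∈ (insert a A).powerset, (∑ i ∈ S, f i) ⊓ (∑ i ∈ insert a A \ S, f i) := by
  rw [sum_powerset_insert ha, smul_sum, ← sum_add_distrib, ← sum_add_distrib]
  refine sum_le_sum fun S hS => ?_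
  have haS : a ∉ S := fun h => ha (mem_powerset.1 hS h)
  rw [insert_sdiff_of_notMem _ haS, sum_insert (fun h => ha (mem_sdiff.1 h).1),
    insert_sdiff_insert, sdiff_insert_of_notMem ha, sum_insert haS]
  exact two_nsmul_inf_add_inf_abs_le _ _ hfa

theorem two_pow_card_nsmul_sum_sub_sup'_le (hf : ∀ i, 0 ≤ f i) {A : Finset ι} (hA : A.Nonempty) :
    2 ^ #A • (∑ i ∈ A, f i - A.sup' hA f)
      ≤ 4 • ∑ S ∈ A.powerset, (∑ i ∈ S, f i) ⊓ (∑ i ∈ A \ S, f i) := by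
  induction hA using Nonempty.cons_induction with
  | singleton a =>
    rw [sum_singleton, sup'_singleton, sub_self, smul_zero]
    exact nsmul_nonneg (sum_powerset_inf_nonneg f hf _) 4
  | cons a A ha hA ih =>
    rw [sup'_cons hA, sum_cons, card_cons, cons_eq_insert]
    have hZ := nsmul_inf_sup'_le hA f fun i hi =>
      two_pow_card_nsmul_inf_le_two_nsmul_sum f hi (hf a) (hf i)
    have hsplit : f a + ∑ i ∈ A, f i - f a ⊔ A.sup' hA f
        = (∑ i ∈ A, f i - A.sup' hA f) + f a ⊓ A.sup' hA f := by
      rw [eq_sub_of_add_eq (inf_add_sup (f a) (A.sup' hA f))]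
      abel
    calc 2 ^ (#A + 1) • (f a + ∑ i ∈ A, f i - f a ⊔ A.sup' hA f)
        = 2 • 2 ^ #A • (∑ i ∈ A, f i - A.sup' hA f) + 2 • 2 ^ #A • (f a ⊓ A.sup' hA f) := by
          rw [hsplit, pow_succ', mul_nsmul', smul_add, smul_add]
      _ ≤ 2 • 4 • ∑ S ∈ A.powerset, (∑ i ∈ S, f i) ⊓ (∑ i ∈ A \ S, f i)
          + 2 • 2 • ∑ S ∈ A.powerset, f a ⊓ |∑ i ∈ A \ S, f i - ∑ i ∈ S, f i| := by
          gcongr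
      _ = 4 • (2 • ∑ S ∈ A.powerset, (∑ i ∈ S, f i) ⊓ (∑ i ∈ A \ S, f i)
          + ∑ S ∈ A.powerset, f a ⊓ |∑ i ∈ A \ S, f i - ∑ i ∈ S, f i|) := by
          abel
      _ ≤ 4 • ∑ S ∈ (insert a A).powerset, (∑ i ∈ S, f i) ⊓ (∑ i ∈ insert a A \ S, f i) := by
          gcongr
          exact two_nsmul_sum_inf_add_sum_inf_abs_le f ha (hf a)

end Splittings

section RealScalars

variable {α : Type*} [AddCommGroup α] [Module ℝ α]

theorem two_pow_add_nsmul_inv_two_pow_smul (m n : ℕ) (x : α) :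
    2 ^ (m + n) • (2 ^ n : ℝ)⁻¹ • x = 2 ^ m • x := by
  rw [← Nat.cast_smul_eq_nsmul ℝ, ← Nat.cast_smul_eq_nsmul ℝ, smul_smul, pow_add]
  congr 1
  push_cast
  field_simp

theorem inv_two_pow_smul_le_inv_two_pow_smul [Lattice α] [AddLeftMono α] {x y : α} {m n : ℕ}
    (h : 2 ^ m • x ≤ 2 ^ n • y) :
    (2 ^ n : ℝ)⁻¹ • x ≤ (2 ^ m : ℝ)⁻¹ • y := by
  rw [← sub_nonneg]
  apply nonneg_of_two_pow_nsmul_nonneg (k := m + n)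
  rwa [smul_sub, two_pow_add_nsmul_inv_two_pow_smul, add_comm,
    two_pow_add_nsmul_inv_two_pow_smul, sub_nonneg]

end RealScalars

theorem norm_le_norm_of_nonneg_of_le {α : Type*} [NormedAddCommGroup α] [Lattice α]
    [IsOrderedAddMonoid α] [HasSolidNorm α] {a b : α} (ha : 0 ≤ a) (hab : a ≤ b) : ‖a‖ ≤ ‖b‖ :=
  HasSolidNorm.solid (by rwa [abs_of_nonneg ha, abs_of_nonneg (ha.trans hab)])

theorem stmt3_general (X : Type*)
    [NormedAddCommGroup X] [Lattice X] [IsOrderedAddMonoid X] [HasSolidNorm X]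
    [NormedSpace ℝ X]
    (n : ℕ) (hn : 0 < n) (f : Fin n → X) (hf : ∀ i, 0 ≤ f i) :
    (2 ^ 8 : ℝ)⁻¹ •
        ((∑ i, f i) -
          (univ : Finset (Fin n)).sup' (univ_nonempty_iff.2 (Fin.pos_iff_nonempty.1 hn)) f) ≤
      (2 ^ n : ℝ)⁻¹ •
        ∑ S ∈ (univ : Finset (Fin n)).powerset,
          ((∑ i ∈ S, f i) ⊓ (∑ i ∈ Sᶜ, f i)) ∧
    (2 ^ 8 : ℝ)⁻¹ *
        ‖(∑ i, f i) -
          (univ : Finset (Fin n)).sup' (univ_nonempty_iff.2 (Fin.pos_iff_nonempty.1 hn)) f‖ ≤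
      (2 ^ n : ℝ)⁻¹ *
        ∑ S ∈ (univ : Finset (Fin n)).powerset,
          ‖(∑ i ∈ S, f i) ⊓ (∑ i ∈ Sᶜ, f i)‖ := by
  simp only [compl_eq_univ_sdiff]
  have hne : (univ : Finset (Fin n)).Nonempty := univ_nonempty_iff.2 (Fin.pos_iff_nonempty.1 hn)
  set D := ∑ i, f i - univ.sup' hne f
  set T := ∑ S ∈ (univ : Finset (Fin n)).powerset, (∑ i ∈ S, f i) ⊓ (∑ i ∈ univ \ S, f i)
  have hD : 0 ≤ D := sub_nonneg.2 <| sup'_le _ _ fun i _ =>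
    single_le_sum (fun j _ => hf j) (mem_univ i)
  have hT : 0 ≤ T := sum_powerset_inf_nonneg f hf univ
  have hkey : 2 ^ n • D ≤ 2 ^ 8 • T := by
    have h := two_pow_card_nsmul_sum_sub_sup'_le f hf hne
    rw [card_univ, Fintype.card_fin] at h
    exact h.trans (nsmul_le_nsmul_left hT (by norm_num))
  have horder := inv_two_pow_smul_le_inv_two_pow_smul hkey
  refine ⟨horder, ?_⟩
  have hL : 0 ≤ (2 ^ 8 : ℝ)⁻¹ • D := by
    simpa using inv_two_pow_smul_le_inv_two_pow_smul (m := 8) (n := 0) (x := 0) (by simpa using hD)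
  calc (2 ^ 8 : ℝ)⁻¹ * ‖D‖ = ‖(2 ^ 8 : ℝ)⁻¹ • D‖ := by rw [norm_smul]; norm_num
    _ ≤ ‖(2 ^ n : ℝ)⁻¹ • T‖ := norm_le_norm_of_nonneg_of_le hL horder
    _ = (2 ^ n : ℝ)⁻¹ * ‖T‖ := by rw [norm_smul]; norm_num
    _ ≤ _ := by gcongr; exact norm_sum_le _ _

/-- For positive elements `f₁, …, f_n` of a Banach lattice,
`𝔼_S ((Σ_{i∈S} f_i) ⊓ (Σ_{i∉S} f_i)) ≥ 2^{-8} (Σ_i f_i - ⋁_i f_i)` in the order, and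
consequently the same inequality holds for the averaged norms. -/
theorem stmt3 (X : Type*)
    [NormedAddCommGroup X] [Lattice X] [IsOrderedAddMonoid X] [HasSolidNorm X]
    [NormedSpace ℝ X] [CompleteSpace X]
    (n : ℕ) (hn : 0 < n) (f : Fin n → X) (hf : ∀ i, 0 ≤ f i) :
    (2 ^ 8 : ℝ)⁻¹ •
        ((∑ i, f i) -
          (univ : Finset (Fin n)).sup' (univ_nonempty_iff.2 (Fin.pos_iff_nonempty.1 hn)) f) ≤
      (2 ^ n : ℝ)⁻¹ •
        ∑ S ∈ (univ : Finset (Fin n)).powerset,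
          ((∑ i ∈ S, f i) ⊓ (∑ i ∈ Sᶜ, f i)) ∧
    (2 ^ 8 : ℝ)⁻¹ *
        ‖(∑ i, f i) -
          (univ : Finset (Fin n)).sup' (univ_nonempty_iff.2 (Fin.pos_iff_nonempty.1 hn)) f‖ ≤
      (2 ^ n : ℝ)⁻¹ *
        ∑ S ∈ (univ : Finset (Fin n)).powerset,
          ‖(∑ i ∈ S, f i) ⊓ (∑ i ∈ Sᶜ, f i)‖ :=
  stmt3_general X n hn f hf
end

section
/- Let E and F be real Banach lattices with E σ-Dedekind complete, ε ≥ 0, and T : E → F a positive bounded linear operator which is ε-disjointness preserving. Then for any x₁, …, x_n ∈ E with x_i ≥ 0, max{ ‖T(⋁_{i=1}^n x_i) − ⋁_{i=1}^n (Tx_i)‖ , ‖⋀_{i=1}^n (Tx_i) − T(⋀_{i=1}^n x_i)‖ } ≤ 256·ε·‖⋁_{i=1}^n x_i‖. -/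
/-!
Put `s = ⋁ xᵢ`. Both defects are of the form `⋀ T yᵢ` for a family `0 ≤ yᵢ ≤ s` with `⋀ yᵢ = 0`
(namely `yᵢ = s - xᵢ`, resp. `yᵢ = xᵢ - ⋀ xⱼ`). σ-Dedekind completeness provides the components
`uᵢ` of `s` in the bands generated by the `yᵢ`; since these bands meet only in the band of
`⋀ yᵢ = 0`, the `uᵢ` yield a partition of `s` into disjoint `pᵢ ≥ 0` with `yᵢ ≤ s - pᵢ`, and so
`0 ≤ ⋀ T yᵢ ≤ ∑ T pᵢ - ⋁ T pᵢ`. For `gᵢ ≥ 0` in a lattice ordered group, averaging over all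
splittings `U ⊔ Uᶜ` of the indices gives `2ⁿ (∑ gᵢ - ⋁ gᵢ) ≤ 4 ∑_U (∑_U gᵢ) ⊓ (∑_{Uᶜ} gᵢ)`.
With `gᵢ = T pᵢ` every term on the right has norm at most `ε ‖s‖`, because `∑_U pᵢ` and
`∑_{Uᶜ} pᵢ` are disjoint; hence the defects are at most `4 ε ‖s‖`, whatever `n` is.
-/

open Finset

section LatticeOrderedGroup

variable {α : Type*} [AddCommGroup α] [Lattice α] [IsOrderedAddMonoid α]

lemma inf_add_le_inf_add_inf {a b c : α} (ha : 0 ≤ a) (hb : 0 ≤ b) (hc : 0 ≤ c) :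
    c ⊓ (a + b) ≤ c ⊓ a + c ⊓ b := by
  rw [add_inf, inf_add, inf_add]
  refine le_inf (le_inf ?_ ?_) (le_inf ?_ inf_le_right)
  · exact inf_le_left.trans (le_add_of_nonneg_right hc)
  · exact inf_le_left.trans (le_add_of_nonneg_left ha)
  · exact inf_le_left.trans (le_add_of_nonneg_right hb)

lemma inf_nsmul_le_nsmul_inf_s5 {c a : α} (hc : 0 ≤ c) (ha : 0 ≤ a) (k : ℕ) :
    c ⊓ k • a ≤ k • (c ⊓ a) := by
  induction k with
  | zero => simp
  | succ k ih =>
    rw [succ_nsmul, succ_nsmul]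
    exact (inf_add_le_inf_add_inf (nsmul_nonneg ha k) ha hc).trans (add_le_add_left ih _)

lemma two_nsmul_sup (a b : α) : 2 • (a ⊔ b) = 2 • a ⊔ 2 • b := by
  have ha : 2 • a = (a - b) + (a + b) := by rw [two_nsmul]; abel
  have hb : 2 • b = (b - a) + (a + b) := by rw [two_nsmul]; abel
  rw [two_nsmul_sup_eq_add_add_abs_sub, ha, hb, ← sup_add, ← neg_sub b a, sup_comm, ← abs]
  abel

lemma two_pow_nsmul_sup (k : ℕ) (a b : α) : 2 ^ k • (a ⊔ b) = 2 ^ k • a ⊔ 2 ^ k • b := by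
  induction k with
  | zero => simp
  | succ k ih => rw [pow_succ, mul_nsmul, mul_nsmul, mul_nsmul, ih, two_nsmul_sup]

lemma inf_le_inf_abs_sub_add_inf_abs_add {c g : α} (d : α) (hc : 0 ≤ c) (hg : 0 ≤ g) :
    c ⊓ g ≤ c ⊓ |d - g| + c ⊓ |d + g| := by
  have h : g ≤ |d - g| + |d + g| := by
    calc g ≤ 2 • g := le_add_of_nonneg_left hg |>.trans_eq (two_nsmul g).symm
      _ = |2 • g| := (abs_of_nonneg (nsmul_nonneg hg 2)).symm
      _ = |-(d - g) + (d + g)| := by rw [two_nsmul]; congr 1; abel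
      _ ≤ |d - g| + |d + g| := (abs_add_le _ _).trans_eq (by rw [abs_neg])
  exact (inf_le_inf_left c h).trans (inf_add_le_inf_add_inf (abs_nonneg _) (abs_nonneg _) hc)

lemma abs_add_abs_le {x y z : α} (h₁ : x + y ≤ z) (h₂ : x - y ≤ z) (h₃ : -x + y ≤ z)
    (h₄ : -x - y ≤ z) : |x| + |y| ≤ z := by
  rw [abs, abs, sup_add, add_sup, add_sup, ← sub_eq_add_neg, ← sub_eq_add_neg]
  exact sup_le (sup_le h₁ h₂) (sup_le h₃ h₄)

lemma abs_sub_add_abs_add_le (d : α) {g : α} (hg : 0 ≤ g) :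
    |d - g| + |d + g| ≤ 2 • (|d| ⊔ g) := by
  have hd : d ≤ |d| ⊔ g := (le_abs_self d).trans le_sup_left
  have hnd : -d ≤ |d| ⊔ g := (neg_le_abs d).trans le_sup_left
  have hg' : g ≤ |d| ⊔ g := le_sup_right
  have hng : -g ≤ |d| ⊔ g := (neg_le_self hg).trans hg'
  rw [two_nsmul]
  apply abs_add_abs_le
  · exact (show d - g + (d + g) = d + d by abel) ▸ add_le_add hd hd
  · exact (show d - g - (d + g) = -g + -g by abel) ▸ add_le_add hng hng
  · exact (show -(d - g) + (d + g) = g + g by abel) ▸ add_le_add hg' hg'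
  · exact (show -(d - g) - (d + g) = -d + -d by abel) ▸ add_le_add hnd hnd

lemma sup_eq_add_sub_inf (a b : α) : a ⊔ b = a + b - a ⊓ b :=
  eq_sub_of_add_eq' (inf_add_sup a b)

lemma isLUB_image_inf {A : Set α} {b : α} (x : α) (hA : IsLUB A b) :
    IsLUB ((x ⊓ ·) '' A) (x ⊓ b) := by
  refine ⟨?_, fun z hz => ?_⟩
  · rintro _ ⟨a, ha, rfl⟩
    exact inf_le_inf_left x (hA.1 ha)
  have hb : b ≤ z + x ⊔ b - x := by
    refine hA.2 fun a ha => ?_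
    calc a = x ⊓ a + x ⊔ a - x := by rw [inf_add_sup]; abel
      _ ≤ z + x ⊔ b - x :=
        sub_le_sub_right (add_le_add (hz ⟨a, ha, rfl⟩) (sup_le_sup_left (hA.1 ha) x)) x
  calc x ⊓ b = x + b - x ⊔ b := by rw [← inf_add_sup x b]; abel
    _ ≤ x + (z + x ⊔ b - x) - x ⊔ b := sub_le_sub_right (add_le_add_right hb x) _
    _ = z := by abel

lemma sub_sup' {ι : Type*} {s : Finset ι} (hs : s.Nonempty) (c : α) (f : ι → α) :
    c - s.sup' hs f = s.inf' hs fun i => c - f i :=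
  map_finset_sup' (OrderIso.subLeft c) hs f

lemma inf'_sub {ι : Type*} {s : Finset ι} (hs : s.Nonempty) (f : ι → α) (c : α) :
    s.inf' hs f - c = s.inf' hs fun i => f i - c :=
  map_finset_inf' (OrderIso.subRight c) hs f

end LatticeOrderedGroup

section SignedSum

variable {ι α : Type*} [DecidableEq ι]

def signedSum [AddCommGroup α] (f : ι → α) (s U : Finset ι) : α :=
  ∑ i ∈ U, f i - ∑ i ∈ s \ U, f i

lemma sum_powerset_insert_signedSum [AddCommGroup α] {M : Type*} [AddCommMonoid M] {a : ι}
    {t : Finset ι} (ha : a ∉ t) (f : ι → α) (g : α → M) :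
    ∑ U ∈ (insert a t).powerset, g (signedSum f (insert a t) U) =
      ∑ U ∈ t.powerset, (g (signedSum f t U - f a) + g (signedSum f t U + f a)) := by
  rw [sum_powerset_insert ha, ← sum_add_distrib]
  refine sum_congr rfl fun U hU => ?_
  have haU : a ∉ U := fun h => ha (mem_powerset.mp hU h)
  unfold signedSum
  rw [insert_sdiff_of_notMem _ haU, sum_insert (fun h => ha (mem_sdiff.mp h).1),
    insert_sdiff_insert, sdiff_insert_of_notMem ha, sum_insert haU]
  congr 2 <;> abel

variable [AddCommGroup α] [Lattice α] [IsOrderedAddMonoid α]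

lemma nsmul_inf_le_sum_inf_abs_signedSum {f : ι → α} {c : α} (hc : 0 ≤ c) {a : ι}
    {t : Finset ι} (ha : a ∉ t) (hfa : 0 ≤ f a) (x : α) :
    2 ^ t.card • (c ⊓ f a) ≤ ∑ U ∈ (insert a t).powerset, c ⊓ |signedSum f (insert a t) U - x| := by
  rw [sum_powerset_insert_signedSum ha f (fun d => c ⊓ |d - x|), ← card_powerset, ← sum_const]
  refine sum_le_sum fun U _ => ?_
  have h := inf_le_inf_abs_sub_add_inf_abs_add (signedSum f t U - x) hc hfa
  rwa [sub_right_comm, sub_add_eq_add_sub] at h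

lemma two_pow_card_nsmul_inf_sup'_le {f : ι → α} {c : α} (hc : 0 ≤ c) {s : Finset ι}
    (hs : s.Nonempty) (hf : ∀ i ∈ s, 0 ≤ f i) (x : α) :
    2 ^ s.card • (c ⊓ s.sup' hs f) ≤ 2 • ∑ U ∈ s.powerset, c ⊓ |signedSum f s U - x| := by
  -- The offset `x` is needed for the induction: removing `a` shifts it by `± f a`.
  induction hs using Finset.Nonempty.cons_induction generalizing x with
  | singleton a =>
    have h := nsmul_inf_le_sum_inf_abs_signedSum hc (notMem_empty a) (hf a (mem_singleton_self a)) x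
    rw [insert_empty, card_empty, pow_zero, one_nsmul] at h
    rw [card_singleton, sup'_singleton, pow_one]
    exact nsmul_le_nsmul_right h 2
  | cons a t ha ht ih =>
    have hft : ∀ i ∈ t, 0 ≤ f i := fun i hi => hf i (mem_cons_of_mem hi)
    rw [card_cons, sup'_cons ht, cons_eq_insert]
    let _ : DistribLattice α := AddCommGroup.toDistribLattice α
    rw [inf_sup_left, two_pow_nsmul_sup]
    refine sup_le ?_ ?_
    · rw [pow_succ, mul_nsmul]
      exact nsmul_le_nsmul_right
        (nsmul_inf_le_sum_inf_abs_signedSum hc ha (hf a (mem_cons_self a t)) x) 2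
    · rw [sum_powerset_insert_signedSum ha f (fun d => c ⊓ |d - x|), sum_add_distrib, smul_add,
        pow_succ, mul_two, add_nsmul]
      have h₂ := ih hft (x - f a)
      simp only [sub_sub_eq_add_sub] at h₂
      simp only [sub_sub]
      exact add_le_add (ih hft (f a + x)) h₂

lemma two_nsmul_sum_abs_signedSum_le {f : ι → α} {s : Finset ι} (hs : s.Nonempty)
    (hf : ∀ i ∈ s, 0 ≤ f i) :
    2 • ∑ U ∈ s.powerset, |signedSum f s U| ≤ 2 ^ s.card • (∑ i ∈ s, f i + s.sup' hs f) := by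
  induction hs using Finset.Nonempty.cons_induction with
  | singleton a =>
    have h := sum_powerset_insert_signedSum (notMem_empty a) f (fun d => |d|)
    rw [insert_empty] at h
    rw [h]
    simp [signedSum, abs_of_nonneg (hf a (mem_singleton_self a))]
  | cons a t ha ht ih =>
    have hfa : 0 ≤ f a := hf a (mem_cons_self a t)
    have hft : ∀ i ∈ t, 0 ≤ f i := fun i hi => hf i (mem_cons_of_mem hi)
    have hC := two_pow_card_nsmul_inf_sup'_le hfa ht hft 0
    simp only [sub_zero] at hC
    have hpair (d : α) : |d - f a| + |d + f a| ≤ 2 • |d| + 2 • f a - 2 • (f a ⊓ |d|) :=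
      (abs_sub_add_abs_add_le d hfa).trans_eq
        (by rw [sup_eq_add_sub_inf, inf_comm, smul_sub, smul_add])
    rw [card_cons, sup'_cons ht, cons_eq_insert, sum_insert ha,
      sum_powerset_insert_signedSum ha f (fun d => |d|)]
    calc 2 • ∑ U ∈ t.powerset, (|signedSum f t U - f a| + |signedSum f t U + f a|)
        ≤ 2 • ∑ U ∈ t.powerset,
            (2 • |signedSum f t U| + 2 • f a - 2 • (f a ⊓ |signedSum f t U|)) :=
          nsmul_le_nsmul_right (sum_le_sum fun U _ => hpair _) 2
      _ = 2 • (2 • ∑ U ∈ t.powerset, |signedSum f t U|) + 2 ^ t.card • (2 • 2 • f a)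
            - 2 • (2 • ∑ U ∈ t.powerset, f a ⊓ |signedSum f t U|) := by
          rw [sum_sub_distrib, sum_add_distrib, sum_const, card_powerset, ← smul_sum, ← smul_sum]
          module
      _ ≤ 2 • (2 ^ t.card • (∑ i ∈ t, f i + t.sup' ht f)) + 2 ^ t.card • (2 • 2 • f a)
            - 2 • (2 ^ t.card • (f a ⊓ t.sup' ht f)) :=
          sub_le_sub (add_le_add_left (nsmul_le_nsmul_right (ih hft) 2) _)
            (nsmul_le_nsmul_right hC 2)
      _ = 2 ^ (t.card + 1) • (f a + ∑ i ∈ t, f i + f a ⊔ t.sup' ht f) := by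
          rw [sup_eq_add_sub_inf]
          module

lemma two_pow_card_nsmul_sum_sub_sup'_le_s5 {f : ι → α} {s : Finset ι} (hs : s.Nonempty)
    (hf : ∀ i ∈ s, 0 ≤ f i) :
    2 ^ s.card • (∑ i ∈ s, f i - s.sup' hs f) ≤
      4 • ∑ U ∈ s.powerset, (∑ i ∈ U, f i) ⊓ ∑ i ∈ s \ U, f i := by
  have hsplit : 2 • ∑ U ∈ s.powerset, (∑ i ∈ U, f i) ⊓ ∑ i ∈ s \ U, f i =
      2 ^ s.card • ∑ i ∈ s, f i - ∑ U ∈ s.powerset, |signedSum f s U| := by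
    rw [smul_sum, ← card_powerset, ← sum_const, ← sum_sub_distrib]
    refine sum_congr rfl fun U hU => ?_
    rw [two_nsmul_inf_eq_add_sub_abs_sub, abs_sub_comm, add_comm, sum_sdiff (mem_powerset.mp hU),
      signedSum]
  calc 2 ^ s.card • (∑ i ∈ s, f i - s.sup' hs f)
      = 2 • 2 ^ s.card • ∑ i ∈ s, f i - 2 ^ s.card • (∑ i ∈ s, f i + s.sup' hs f) := by module
    _ ≤ 2 • 2 ^ s.card • ∑ i ∈ s, f i - 2 • ∑ U ∈ s.powerset, |signedSum f s U| :=
      sub_le_sub_left (two_nsmul_sum_abs_signedSum_le hs hf) _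
    _ = 4 • ∑ U ∈ s.powerset, (∑ i ∈ U, f i) ⊓ ∑ i ∈ s \ U, f i := by
      rw [show 4 = 2 * 2 from rfl, mul_nsmul, hsplit, smul_sub]

end SignedSum

section Disjointness

variable {ι α : Type*} [AddCommGroup α] [Lattice α] [IsOrderedAddMonoid α]

lemma inf_sum_eq_zero {x : α} {p : ι → α} {s : Finset ι} (hx : 0 ≤ x) (hp : ∀ i ∈ s, 0 ≤ p i)
    (h : ∀ i ∈ s, x ⊓ p i = 0) : x ⊓ ∑ i ∈ s, p i = 0 := by
  refine (sum_induction p (fun y => 0 ≤ y ∧ x ⊓ y = 0) (fun a b ha hb => ⟨add_nonneg ha.1 hb.1, ?_⟩)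
    ⟨le_rfl, inf_eq_right.2 hx⟩ fun i hi => ⟨hp i hi, h i hi⟩).2
  refine le_antisymm ?_ (le_inf hx (add_nonneg ha.1 hb.1))
  calc x ⊓ (a + b) ≤ x ⊓ a + x ⊓ b := inf_add_le_inf_add_inf ha.1 hb.1 hx
    _ = 0 := by rw [ha.2, hb.2, add_zero]

lemma sum_inf_sum_eq_zero {p : ι → α} {s t : Finset ι} (hp : ∀ i, 0 ≤ p i)
    (h : ∀ i ∈ s, ∀ j ∈ t, p i ⊓ p j = 0) : (∑ i ∈ s, p i) ⊓ ∑ j ∈ t, p j = 0 :=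
  inf_sum_eq_zero (sum_nonneg fun i _ => hp i) (fun j _ => hp j) fun j hj => by
    rw [inf_comm]
    exact inf_sum_eq_zero (hp j) (fun i _ => hp i) fun i hi => by rw [inf_comm]; exact h i hi j hj

lemma le_of_inf_sub_eq_zero {s u : α} (h : u ⊓ (s - u) = 0) : u ≤ s :=
  sub_nonneg.1 (h.symm.trans_le inf_le_right)

lemma sub_inf_le_sub_of_le {s u v : α} (hus : u ≤ s) (hvs : v ≤ s) : u - u ⊓ v ≤ s - v := by
  rw [sub_inf, sub_self]
  exact sup_le (sub_nonneg.2 hvs) (sub_le_sub_right hus v)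

lemma inf_inf_sub_inf_eq_zero {s u v : α} (hu : u ⊓ (s - u) = 0) (hv : v ⊓ (s - v) = 0) :
    u ⊓ v ⊓ (u - u ⊓ v) = 0 := by
  refine le_antisymm ?_ (le_inf (le_inf (hu.symm.trans_le inf_le_left)
    (hv.symm.trans_le inf_le_left)) (sub_nonneg.2 inf_le_left))
  exact (inf_le_inf inf_le_right (sub_inf_le_sub_of_le (le_of_inf_sub_eq_zero hu)
    (le_of_inf_sub_eq_zero hv))).trans_eq hv

lemma exists_pairwise_disjoint_sum_add_eq {s : α} (hs : 0 ≤ s) (t : Finset ι) (u : ι → α)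
    (hu : ∀ i ∈ t, u i ⊓ (s - u i) = 0) :
    ∃ p : ι → α, ∃ r : α, (∀ i ∈ t, 0 ≤ p i ∧ p i ≤ s - u i) ∧
      (t : Set ι).Pairwise (fun i j => p i ⊓ p j = 0) ∧ 0 ≤ r ∧ (∀ i ∈ t, r ≤ u i) ∧
      ∑ i ∈ t, p i + r = s := by
  classical
  induction t using Finset.cons_induction generalizing s u with
  | empty => exact ⟨0, s, by simp, by simp, hs, by simp, by simp⟩
  | cons a t ha ih =>
    -- `p a = s - u a`; the other `p i` partition `u a` along its components `u a ⊓ u i`.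
    have hua := hu a (mem_cons_self a t)
    have huas := le_of_inf_sub_eq_zero hua
    obtain ⟨p, r, hp, hpair, hr, hru, hsum⟩ := ih (hua.symm.trans_le inf_le_left)
      (fun i => u a ⊓ u i) fun i hi => inf_inf_sub_inf_eq_zero hua (hu i (mem_cons_of_mem hi))
    have hpu : ∀ i ∈ t, p i ≤ s - u i ∧ p i ≤ u a := fun i hi =>
      ⟨(hp i hi).2.trans (sub_inf_le_sub_of_le huas
          (le_of_inf_sub_eq_zero (hu i (mem_cons_of_mem hi)))),
        (hp i hi).2.trans (sub_le_self _ (hr.trans (hru i hi)))⟩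
    set q := Function.update p a (s - u a)
    have hqa : q a = s - u a := Function.update_self ..
    have hq : ∀ i ∈ t, q i = p i := fun i hi =>
      Function.update_of_ne (ne_of_mem_of_not_mem hi ha) ..
    have hqaq : ∀ i ∈ t, q a ⊓ q i = 0 := fun i hi => by
      rw [hq i hi, hqa]
      refine le_antisymm ?_ (le_inf (sub_nonneg.2 huas) (hp i hi).1)
      exact (inf_le_inf_left _ (hpu i hi).2).trans_eq (by rw [inf_comm, hua])
    refine ⟨q, r, fun i hi => ?_, ?_, hr, fun i hi => ?_, ?_⟩
    · rcases mem_cons.1 hi with rfl | hi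
      · rw [hqa]
        exact ⟨sub_nonneg.2 huas, le_rfl⟩
      · rw [hq i hi]
        exact ⟨(hp i hi).1, (hpu i hi).1⟩
    · rw [coe_cons]
      exact (hpair.imp_on fun i hi j hj _ h => by rwa [hq i hi, hq j hj]).insert_of_notMem ha
        fun i hi => ⟨hqaq i hi, by rw [inf_comm]; exact hqaq i hi⟩
    · rcases mem_cons.1 hi with rfl | hi
      · exact (le_add_of_nonneg_left (sum_nonneg fun i hi => (hp i hi).1)).trans hsum.le
      · exact (hru i hi).trans inf_le_right
    · rw [sum_cons, hqa, sum_update_of_notMem ha, add_assoc, hsum, sub_add_cancel]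

end Disjointness

section Band

variable {α : Type*} [Lattice α] [Zero α]

/-- `c ∈ {y}ᗮᗮ`, tested against positive elements. -/
def InBand (c y : α) : Prop := ∀ w, 0 ≤ w → w ⊓ y = 0 → w ⊓ c = 0

lemma InBand.mono {c c' y : α} (h : InBand c y) (hc' : 0 ≤ c') (hle : c' ≤ c) : InBand c' y :=
  fun w hw hwy => le_antisymm ((inf_le_inf_left w hle).trans_eq (h w hw hwy)) (le_inf hw hc')

lemma InBand.inf {c y z : α} (hc : 0 ≤ c) (hy : 0 ≤ y) (hcy : InBand c y) (hcz : InBand c z) :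
    InBand c (y ⊓ z) := by
  intro w hw hwyz
  have h : w ⊓ y ⊓ c = 0 := hcz _ (le_inf hw hy) (by rw [inf_assoc, hwyz])
  rw [inf_right_comm] at h
  simpa [inf_assoc] using hcy _ (le_inf hw hc) h

lemma InBand.finset_inf' {ι : Type*} {c : α} {y : ι → α} {s : Finset ι} (hs : s.Nonempty)
    (hc : 0 ≤ c) (hy : ∀ i ∈ s, 0 ≤ y i) (h : ∀ i ∈ s, InBand c (y i)) :
    InBand c (s.inf' hs y) :=
  (inf'_induction hs y (p := fun z => 0 ≤ z ∧ InBand c z)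
    (fun _ h₁ _ h₂ => ⟨le_inf h₁.1 h₂.1, h₁.2.inf hc h₁.1 h₂.2⟩) fun i hi => ⟨hy i hi, h i hi⟩).2

lemma InBand.eq_zero {c : α} (h : InBand c 0) (hc : 0 ≤ c) : c = 0 := by
  simpa using h c hc (inf_eq_right.2 hc)

end Band

section BandOfIsLUB

variable {α : Type*} [AddCommGroup α] [Lattice α] [IsOrderedAddMonoid α]

lemma inBand_of_isLUB {s y u : α} (hy : 0 ≤ y) (hu₀ : 0 ≤ u)
    (hu : IsLUB (Set.range fun k : ℕ => s ⊓ k • y) u) : InBand u y := by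
  intro w hw hwy
  refine le_antisymm ((isLUB_image_inf w hu).2 ?_) (le_inf hw hu₀)
  rintro _ ⟨_, ⟨k, rfl⟩, rfl⟩
  calc w ⊓ (s ⊓ k • y) ≤ w ⊓ k • y := inf_le_inf_left _ inf_le_right
    _ ≤ k • (w ⊓ y) := inf_nsmul_le_nsmul_inf_s5 hw hy k
    _ = 0 := by rw [hwy, smul_zero]

end BandOfIsLUB

section NormedLattice

variable {E : Type*} [NormedAddCommGroup E] [Lattice E] [IsOrderedAddMonoid E] [HasSolidNorm E]
  [NormedSpace ℝ E]

lemma eq_zero_of_forall_nsmul_le {c s : E} (hc : 0 ≤ c) (h : ∀ k : ℕ, k • c ≤ s) : c = 0 := by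
  by_contra hne
  obtain ⟨k, hk⟩ := exists_nat_gt (‖s‖ / ‖c‖)
  have hkc : ‖k • c‖ ≤ ‖s‖ := norm_le_norm_of_abs_le_abs <| by
    rw [abs_of_nonneg (nsmul_nonneg hc k)]
    exact (h k).trans (le_abs_self s)
  rw [RCLike.norm_nsmul ℝ, nsmul_eq_mul, ← le_div_iff₀ (norm_pos_iff.2 hne)] at hkc
  exact hkc.not_gt hk

lemma sub_inf_eq_zero_of_isLUB {s y u : E} (hs : 0 ≤ s) (hy : 0 ≤ y)
    (hu : IsLUB (Set.range fun k : ℕ => s ⊓ k • y) u) : (s - u) ⊓ y = 0 := by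
  have hus : u ≤ s := hu.2 <| by rintro _ ⟨k, rfl⟩; exact inf_le_left
  have hc : 0 ≤ (s - u) ⊓ y := le_inf (sub_nonneg.2 hus) hy
  have hk : ∀ k : ℕ, k • ((s - u) ⊓ y) ≤ s ⊓ k • y := by
    intro k
    induction k with
    | zero => simpa using hs
    | succ k ih =>
      rw [succ_nsmul, succ_nsmul]
      refine le_inf ?_ (add_le_add (ih.trans inf_le_right) inf_le_right)
      calc k • ((s - u) ⊓ y) + (s - u) ⊓ y ≤ u + (s - u) :=
            add_le_add (ih.trans (hu.1 ⟨k, rfl⟩)) inf_le_left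
        _ = s := add_sub_cancel u s
  exact eq_zero_of_forall_nsmul_le hc fun k => (hk k).trans inf_le_left

lemma exists_inf_sub_eq_zero_inBand
    (hDed : ∀ A : Set E, A.Nonempty → A.Countable → BddAbove A → ∃ a : E, IsLUB A a)
    {s y : E} (hs : 0 ≤ s) (hy : 0 ≤ y) :
    ∃ u, u ⊓ (s - u) = 0 ∧ s ⊓ y ≤ u ∧ InBand u y := by
  obtain ⟨u, hu⟩ := hDed (Set.range fun k : ℕ => s ⊓ k • y) (Set.range_nonempty _)
    (Set.countable_range _) ⟨s, by rintro _ ⟨k, rfl⟩; exact inf_le_left⟩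
  have hu₀ : 0 ≤ u := by simpa [inf_eq_right.2 hs] using hu.1 ⟨0, rfl⟩
  have hus : u ≤ s := hu.2 <| by rintro _ ⟨k, rfl⟩; exact inf_le_left
  have hband := inBand_of_isLUB hy hu₀ hu
  refine ⟨u, ?_, by simpa using hu.1 ⟨1, rfl⟩, hband⟩
  rw [inf_comm]
  exact hband _ (sub_nonneg.2 hus) (sub_inf_eq_zero_of_isLUB hs hy hu)

lemma exists_partition_of_inf'_eq_zero
    (hDed : ∀ A : Set E, A.Nonempty → A.Countable → BddAbove A → ∃ a : E, IsLUB A a)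
    {ι : Type*} [Fintype ι] [Nonempty ι] {s : E} (hs : 0 ≤ s) {y : ι → E} (hy : ∀ i, 0 ≤ y i)
    (hys : ∀ i, y i ≤ s) (hinf : univ.inf' univ_nonempty y = 0) :
    ∃ p : ι → E, (∀ i, 0 ≤ p i) ∧ Pairwise (fun i j => p i ⊓ p j = 0) ∧ ∑ i, p i = s ∧
      ∀ i, y i ≤ s - p i := by
  choose u hu hyu hband using fun i => exists_inf_sub_eq_zero_inBand hDed hs (hy i)
  obtain ⟨p, r, hp, hpair, hr, hru, hsum⟩ :=
    exists_pairwise_disjoint_sum_add_eq hs univ u fun i _ => hu i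
  -- `r` lies in every band `{yᵢ}ᗮᗮ`, hence in `{⋀ yᵢ}ᗮᗮ = {0}ᗮᗮ`.
  have hr₀ : r = 0 := by
    have h := InBand.finset_inf' univ_nonempty hr (fun i _ => hy i) fun i hi =>
      (hband i).mono hr (hru i hi)
    rw [hinf] at h
    exact h.eq_zero hr
  refine ⟨p, fun i => (hp i (mem_univ i)).1, fun i j hij => hpair (mem_coe.2 (mem_univ i))
    (mem_coe.2 (mem_univ j)) hij, by simpa [hr₀] using hsum, fun i => ?_⟩
  calc y i = s ⊓ y i := (inf_eq_right.2 (hys i)).symm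
    _ ≤ u i := hyu i
    _ ≤ s - p i := le_sub_comm.1 (hp i (mem_univ i)).2

lemma norm_sum_sub_sup'_le {ι : Type*} [DecidableEq ι] {g : ι → E} {s : Finset ι}
    (hs : s.Nonempty) (hg : ∀ i ∈ s, 0 ≤ g i) {δ : ℝ}
    (hδ : ∀ U ⊆ s, ‖(∑ i ∈ U, g i) ⊓ ∑ i ∈ s \ U, g i‖ ≤ δ) :
    ‖∑ i ∈ s, g i - s.sup' hs g‖ ≤ 4 * δ := by
  set X := ∑ i ∈ s, g i - s.sup' hs g
  set Φ := ∑ U ∈ s.powerset, (∑ i ∈ U, g i) ⊓ ∑ i ∈ s \ U, g i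
  have hX : 0 ≤ X := sub_nonneg.2 (sup'_le hs g fun i hi => single_le_sum hg hi)
  have hΦ : 0 ≤ Φ := sum_nonneg fun U hU =>
    le_inf (sum_nonneg fun i hi => hg i (mem_powerset.1 hU hi))
      (sum_nonneg fun i hi => hg i (mem_sdiff.1 hi).1)
  have hΦδ : ‖Φ‖ ≤ 2 ^ s.card * δ := (norm_sum_le _ _).trans <| by
    simpa using sum_le_sum fun U hU => hδ U (mem_powerset.1 hU)
  have h : ‖2 ^ s.card • X‖ ≤ ‖4 • Φ‖ := norm_le_norm_of_abs_le_abs <| by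
    rw [abs_of_nonneg (nsmul_nonneg hX _), abs_of_nonneg (nsmul_nonneg hΦ _)]
    exact two_pow_card_nsmul_sum_sub_sup'_le_s5 hs hg
  rw [RCLike.norm_nsmul ℝ, RCLike.norm_nsmul ℝ, nsmul_eq_mul, nsmul_eq_mul] at h
  push_cast at h
  have h2 : (0 : ℝ) < 2 ^ s.card := by positivity
  nlinarith

end NormedLattice

section Operator

variable {E F : Type*}
  [NormedAddCommGroup E] [Lattice E] [IsOrderedAddMonoid E] [HasSolidNorm E] [NormedSpace ℝ E]
  [NormedAddCommGroup F] [Lattice F] [IsOrderedAddMonoid F] [NormedSpace ℝ F]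

lemma norm_sum_map_inf_sum_map_le {ε : ℝ} (hε : 0 ≤ ε) (T : E →L[ℝ] F)
    (hpos : ∀ x, 0 ≤ x → 0 ≤ T x)
    (hDP : ∀ x y : E, |x| ⊓ |y| = 0 → ‖|T x| ⊓ |T y|‖ ≤ ε * max ‖x‖ ‖y‖)
    {ι : Type*} [DecidableEq ι] {p : ι → E} (hp : ∀ i, 0 ≤ p i)
    (hpair : Pairwise fun i j => p i ⊓ p j = 0) {s U : Finset ι}
    (hU : U ⊆ s) :
    ‖(∑ i ∈ U, T (p i)) ⊓ ∑ i ∈ s \ U, T (p i)‖ ≤ ε * ‖∑ i ∈ s, p i‖ := by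
  have hnorm : ∀ V ⊆ s, ‖∑ i ∈ V, p i‖ ≤ ‖∑ i ∈ s, p i‖ := fun V hV =>
    norm_le_norm_of_abs_le_abs <| by
      rw [abs_of_nonneg (sum_nonneg fun i _ => hp i), abs_of_nonneg (sum_nonneg fun i _ => hp i)]
      exact sum_le_sum_of_subset_of_nonneg hV fun i _ _ => hp i
  have hdisj : (∑ i ∈ U, p i) ⊓ ∑ i ∈ s \ U, p i = 0 :=
    sum_inf_sum_eq_zero hp fun i hi j hj => hpair (ne_of_mem_of_not_mem hi (mem_sdiff.1 hj).2)
  have hU₀ : 0 ≤ ∑ i ∈ U, p i := sum_nonneg fun i _ => hp i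
  have hV₀ : 0 ≤ ∑ i ∈ s \ U, p i := sum_nonneg fun i _ => hp i
  have h := hDP (∑ i ∈ U, p i) (∑ i ∈ s \ U, p i) (by rwa [abs_of_nonneg hU₀, abs_of_nonneg hV₀])
  rw [abs_of_nonneg (hpos _ hU₀), abs_of_nonneg (hpos _ hV₀), map_sum, map_sum] at h
  exact h.trans (mul_le_mul_of_nonneg_left (max_le (hnorm U hU) (hnorm _ sdiff_subset)) hε)

lemma norm_inf'_map_le [HasSolidNorm F]
    (hDed : ∀ A : Set E, A.Nonempty → A.Countable → BddAbove A → ∃ a : E, IsLUB A a)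
    {ε : ℝ} (hε : 0 ≤ ε) (T : E →L[ℝ] F) (hpos : ∀ x, 0 ≤ x → 0 ≤ T x)
    (hDP : ∀ x y : E, |x| ⊓ |y| = 0 → ‖|T x| ⊓ |T y|‖ ≤ ε * max ‖x‖ ‖y‖)
    {ι : Type*} [Fintype ι] [Nonempty ι] {s : E} (hs : 0 ≤ s) {y : ι → E}
    (hy : ∀ i, 0 ≤ y i) (hys : ∀ i, y i ≤ s) (hinf : univ.inf' univ_nonempty y = 0) :
    ‖univ.inf' univ_nonempty (fun i => T (y i))‖ ≤ 4 * ε * ‖s‖ := by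
  classical
  obtain ⟨p, hp, hpair, hsum, hyp⟩ := exists_partition_of_inf'_eq_zero hDed hs hy hys hinf
  have hmono : Monotone T := fun a b hab => sub_nonneg.1 (by simpa using hpos _ (sub_nonneg.2 hab))
  have hlow : 0 ≤ univ.inf' univ_nonempty (fun i => T (y i)) :=
    le_inf' _ _ fun i _ => hpos _ (hy i)
  have hup : univ.inf' univ_nonempty (fun i => T (y i)) ≤
      ∑ i, T (p i) - univ.sup' univ_nonempty (fun i => T (p i)) := by
    rw [← map_sum, hsum, le_sub_comm]
    refine sup'_le _ _ fun i _ => ?_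
    rw [le_sub_comm]
    exact (inf'_le _ (mem_univ i)).trans ((hmono (hyp i)).trans_eq (map_sub T s (p i)))
  calc ‖univ.inf' univ_nonempty (fun i => T (y i))‖
      ≤ ‖∑ i, T (p i) - univ.sup' univ_nonempty (fun i => T (p i))‖ :=
        norm_le_norm_of_abs_le_abs <| by
          rwa [abs_of_nonneg hlow, abs_of_nonneg (hlow.trans hup)]
    _ ≤ 4 * (ε * ‖s‖) := norm_sum_sub_sup'_le _ (fun i _ => hpos _ (hp i)) fun U hU =>
        hsum ▸ norm_sum_map_inf_sum_map_le hε T hpos hDP hp hpair hU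
    _ = 4 * ε * ‖s‖ := by ring

end Operator

theorem stmt5_general (E F : Type*)
    [NormedAddCommGroup E] [Lattice E] [IsOrderedAddMonoid E] [HasSolidNorm E] [NormedSpace ℝ E]
    [NormedAddCommGroup F] [Lattice F] [IsOrderedAddMonoid F] [HasSolidNorm F] [NormedSpace ℝ F]
    (hDedekind : ∀ s : Set E, s.Nonempty → s.Countable → BddAbove s → ∃ a : E, IsLUB s a)
    (ε : ℝ) (hε : 0 ≤ ε) (T : E →L[ℝ] F)
    (hpos : ∀ x : E, 0 ≤ x → 0 ≤ T x)
    (hDP : ∀ x y : E, |x| ⊓ |y| = 0 → ‖|T x| ⊓ |T y|‖ ≤ ε * max ‖x‖ ‖y‖)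
    (n : ℕ) (hn : 0 < n) (x : Fin n → E) (hx : ∀ i, 0 ≤ x i) :
    max
      ‖T ((univ : Finset (Fin n)).sup' (univ_nonempty_iff.2 (Fin.pos_iff_nonempty.1 hn)) x) -
        (univ : Finset (Fin n)).sup' (univ_nonempty_iff.2 (Fin.pos_iff_nonempty.1 hn))
          (fun i => T (x i))‖
      ‖(univ : Finset (Fin n)).inf' (univ_nonempty_iff.2 (Fin.pos_iff_nonempty.1 hn))
          (fun i => T (x i)) -
        T ((univ : Finset (Fin n)).inf' (univ_nonempty_iff.2 (Fin.pos_iff_nonempty.1 hn)) x)‖ ≤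
      256 * ε *
        ‖(univ : Finset (Fin n)).sup' (univ_nonempty_iff.2 (Fin.pos_iff_nonempty.1 hn)) x‖ := by
  have : Nonempty (Fin n) := Fin.pos_iff_nonempty.1 hn
  set s := univ.sup' univ_nonempty x
  have hxs : ∀ i, x i ≤ s := fun i => le_sup' x (mem_univ i)
  have hs : 0 ≤ s := (hx ⟨0, hn⟩).trans (hxs _)
  have hsup := norm_inf'_map_le hDedekind hε T hpos hDP hs (y := fun i => s - x i)
    (fun i => sub_nonneg.2 (hxs i)) (fun i => sub_le_self s (hx i)) (by rw [← sub_sup', sub_self])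
  have hinf := norm_inf'_map_le hDedekind hε T hpos hDP hs
    (y := fun i => x i - univ.inf' univ_nonempty x) (fun i => sub_nonneg.2 (inf'_le x (mem_univ i)))
    (fun i => (sub_le_self _ (le_inf' _ _ fun j _ => hx j)).trans (hxs i))
    (by rw [← inf'_sub, sub_self])
  simp only [map_sub, ← sub_sup', ← inf'_sub] at hsup hinf
  calc _ ≤ 4 * ε * ‖s‖ := max_le hsup hinf
    _ ≤ 256 * ε * ‖s‖ := by gcongr; norm_num

/-- If `E` is σ-Dedekind complete and `T : E → F` is positive and
`ε`-disjointness preserving, then for positive `x₁, …, x_n`,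
`max(‖T(⋁ x_i) - ⋁ Tx_i‖, ‖⋀ Tx_i - T(⋀ x_i)‖) ≤ 256 ε ‖⋁ x_i‖`. -/
theorem stmt5 (E F : Type*)
    [NormedAddCommGroup E] [Lattice E] [IsOrderedAddMonoid E] [HasSolidNorm E] [NormedSpace ℝ E] [CompleteSpace E]
    [NormedAddCommGroup F] [Lattice F] [IsOrderedAddMonoid F] [HasSolidNorm F] [NormedSpace ℝ F] [CompleteSpace F]
    (hDedekind : ∀ s : Set E, s.Nonempty → s.Countable → BddAbove s → ∃ a : E, IsLUB s a)
    (ε : ℝ) (hε : 0 ≤ ε) (T : E →L[ℝ] F)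
    (hpos : ∀ x : E, 0 ≤ x → 0 ≤ T x)
    (hDP : ∀ x y : E, |x| ⊓ |y| = 0 → ‖|T x| ⊓ |T y|‖ ≤ ε * max ‖x‖ ‖y‖)
    (n : ℕ) (hn : 0 < n) (x : Fin n → E) (hx : ∀ i, 0 ≤ x i) :
    max
      ‖T ((univ : Finset (Fin n)).sup' (univ_nonempty_iff.2 (Fin.pos_iff_nonempty.1 hn)) x) -
        (univ : Finset (Fin n)).sup' (univ_nonempty_iff.2 (Fin.pos_iff_nonempty.1 hn))
          (fun i => T (x i))‖
      ‖(univ : Finset (Fin n)).inf' (univ_nonempty_iff.2 (Fin.pos_iff_nonempty.1 hn))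
          (fun i => T (x i)) -
        T ((univ : Finset (Fin n)).inf' (univ_nonempty_iff.2 (Fin.pos_iff_nonempty.1 hn)) x)‖ ≤
      256 * ε *
        ‖(univ : Finset (Fin n)).sup' (univ_nonempty_iff.2 (Fin.pos_iff_nonempty.1 hn)) x‖ :=
  stmt5_general E F hDedekind ε hε T hpos hDP n hn x hx
end
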